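/- arXiv:1906.02847 — 2 statements merged into one kernel-verified Lean document; each statement's English description precedes it below -/
import Mathlib

section
/- The set of squarefree positive integers has natural density 6/π², i.e., (1/x)·#{n ≤ x : n squarefree} → 6/π² = 1/ζ(2) as x → ∞. -/
open Filter Finset ArithmeticFunction
open scoped ArithmeticFunction.Moebius

private lemma sqfree_sum_mu_divisors (b : ℕ) :
    ∑ d ∈ b.divisors, μ d = if b = 1 then 1 else 0 := by
  have := congrArg (fun f : ArithmeticFunction ℤ => f b) moebius_mul_coe_zeta
  simp only [coe_mul_zeta_apply, one_apply] at this
  exact this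

private lemma sqfree_sq_dvd_iff {a b d : ℕ} (ha0 : a ≠ 0) (hb0 : b ≠ 0)
    (hsq : Squarefree a) (hd : d ≠ 0) :
    d ^ 2 ∣ b ^ 2 * a ↔ d ∣ b := by
  constructor
  · intro h
    rw [← Nat.factorization_le_iff_dvd hd hb0]
    intro p
    have h2 := (Nat.factorization_le_iff_dvd (pow_ne_zero 2 hd)
      (mul_ne_zero (pow_ne_zero 2 hb0) ha0)).mpr h
    have h3 := h2 p
    rw [Nat.factorization_mul (pow_ne_zero 2 hb0) ha0, Nat.factorization_pow,
      Nat.factorization_pow] at h3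
    have h4 := hsq.natFactorization_le_one p
    simp only [Finsupp.coe_add, Finsupp.coe_smul, Pi.add_apply, Pi.smul_apply,
      smul_eq_mul] at h3
    omega
  · intro h
    exact dvd_mul_of_dvd_left (pow_dvd_pow_of_dvd h 2) a

private lemma sqfree_indicator_eq {n x : ℕ} (hn : n ≠ 0) (hnx : n ≤ x) :
    (if Squarefree n then (1 : ℤ) else 0)
      = ∑ d ∈ (Icc 1 x).filter (fun d => d ^ 2 ∣ n), μ d := by
  obtain ⟨a, b, ha0, hb0, hab, hsq⟩ := Nat.sq_mul_squarefree_of_pos (Nat.pos_of_ne_zero hn)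
  have hset : (Icc 1 x).filter (fun d => d ^ 2 ∣ n) = b.divisors := by
    ext d
    simp only [mem_filter, mem_Icc, Nat.mem_divisors]
    constructor
    · rintro ⟨⟨h1, h2⟩, h3⟩
      refine ⟨?_, hb0.ne'⟩
      rw [← hab] at h3
      exact (sqfree_sq_dvd_iff ha0.ne' hb0.ne' hsq (by omega)).mp h3
    · rintro ⟨h1, -⟩
      have hd0 : d ≠ 0 := fun h => hb0.ne' (Nat.eq_zero_of_zero_dvd (h ▸ h1))
      have hdn : d ^ 2 ∣ n := by
        rw [← hab]; exact (sqfree_sq_dvd_iff ha0.ne' hb0.ne' hsq hd0).mpr h1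
      have : d ≤ n := Nat.le_of_dvd (Nat.pos_of_ne_zero hn)
        (dvd_trans (dvd_pow_self d two_ne_zero) hdn)
      exact ⟨⟨by omega, le_trans this hnx⟩, hdn⟩
  rw [hset, sqfree_sum_mu_divisors]
  have : Squarefree n ↔ b = 1 := by
    constructor
    · intro h
      have : b * b ∣ n := by rw [← hab]; exact Dvd.intro a (by ring)
      exact Nat.isUnit_iff.mp (h b this)
    · intro h
      rw [← hab, h]; simpa using hsq
  simp [this]

private lemma sqfree_count_eq (x : ℕ) :
    ((((Icc 1 x).filter (fun n => Squarefree n)).card : ℤ)) =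
      ∑ d ∈ Icc 1 x, μ d * (x / d ^ 2 : ℕ) := by
  rw [card_filter]
  push_cast
  calc (∑ n ∈ Icc 1 x, if Squarefree n then (1 : ℤ) else 0)
      = ∑ n ∈ Icc 1 x, ∑ d ∈ (Icc 1 x).filter (fun d => d ^ 2 ∣ n), μ d := by
        refine Finset.sum_congr rfl fun n hn => ?_
        rw [mem_Icc] at hn
        exact sqfree_indicator_eq (by omega) hn.2
    _ = ∑ n ∈ Icc 1 x, ∑ d ∈ Icc 1 x, if d ^ 2 ∣ n then μ d else 0 := by
        refine Finset.sum_congr rfl fun n _ => ?_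
        rw [Finset.sum_filter]
    _ = ∑ d ∈ Icc 1 x, ∑ n ∈ Icc 1 x, if d ^ 2 ∣ n then μ d else 0 := Finset.sum_comm
    _ = ∑ d ∈ Icc 1 x, μ d * (x / d ^ 2 : ℕ) := by
        refine Finset.sum_congr rfl fun d _ => ?_
        have hIcc : Icc 1 x = Ioc 0 x := by ext m; simp [Nat.lt_iff_add_one_le]
        rw [← Finset.sum_filter, Finset.sum_const, hIcc, Nat.Ioc_filter_dvd_card_eq_div,
          nsmul_eq_mul]
        push_cast
        ring

private lemma sqfree_count_eq' (x : ℕ) :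
    ((((Icc 1 x).filter (fun n => Squarefree n)).card : ℤ)) =
      ∑ d ∈ Icc 1 (Nat.sqrt x), μ d * (x / d ^ 2 : ℕ) := by
  rw [sqfree_count_eq]
  refine (Finset.sum_subset (Finset.Icc_subset_Icc_right (Nat.sqrt_le_self x)) ?_).symm
  intro d hd hd'
  rw [mem_Icc] at hd hd'
  have hlt : Nat.sqrt x < d := by omega
  have : x < d ^ 2 := by
    have := Nat.sqrt_lt'.mp hlt
    nlinarith
  rw [Nat.div_eq_of_lt this]
  simp

private noncomputable def sqfreeG : ℕ → ℝ := fun d => (μ d : ℝ) / (d : ℝ) ^ 2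

private lemma sqfree_hasSum_g : HasSum sqfreeG (6 / Real.pi ^ 2) := by
  have hs : (1 : ℝ) < (2 : ℂ).re := by norm_num
  have hsum : LSeriesSummable (fun n => ((μ n : ℤ) : ℂ)) 2 :=
    LSeriesSummable_moebius_iff.mpr hs
  have hmul := LSeries_zeta_mul_Lseries_moebius (s := 2) hs
  rw [LSeries_zeta_eq_riemannZeta hs, riemannZeta_two] at hmul
  have hpi2 : (Real.pi : ℂ) ^ 2 ≠ 0 :=
    pow_ne_zero _ (Complex.ofReal_ne_zero.mpr Real.pi_ne_zero)
  have hL : LSeries (fun n => ((μ n : ℤ) : ℂ)) 2 = 6 / (Real.pi : ℂ) ^ 2 := by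
    rw [eq_div_iff hpi2]
    field_simp at hmul
    linear_combination hmul
  have hHS : HasSum (fun n => LSeries.term (fun n => ((μ n : ℤ) : ℂ)) 2 n)
      ((6 : ℂ) / (Real.pi : ℂ) ^ 2) := hL ▸ hsum.hasSum
  have hterm : ∀ n, LSeries.term (fun n => ((μ n : ℤ) : ℂ)) 2 n = ((sqfreeG n : ℝ) : ℂ) := by
    intro n
    rcases eq_or_ne n 0 with rfl | hn
    · simp [LSeries.term, sqfreeG]
    · rw [LSeries.term_of_ne_zero hn]
      rw [show ((n : ℂ) ^ (2 : ℂ)) = (n : ℂ) ^ (2 : ℕ) by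
        rw [← Complex.cpow_natCast]; norm_num]
      simp only [sqfreeG]
      push_cast
      ring
  rw [funext hterm] at hHS
  have : ((6 : ℂ) / (Real.pi : ℂ) ^ 2) = (((6 / Real.pi ^ 2 : ℝ)) : ℂ) := by push_cast; ring
  rw [this] at hHS
  exact Complex.hasSum_ofReal.mp hHS

private lemma sqfree_floor_div_bounds (x d : ℕ) (hx : 0 < x) (hd : 0 < d) :
    |(((x / d ^ 2 : ℕ) : ℝ)) / x - 1 / (d : ℝ) ^ 2| ≤ 1 / (x : ℝ) := by
  have hd2 : (0 : ℝ) < (d : ℝ) ^ 2 := by positivity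
  have hxR : (0 : ℝ) < (x : ℝ) := by exact_mod_cast hx
  have high : (((x / d ^ 2 : ℕ) : ℝ)) ≤ (x : ℝ) / (d : ℝ) ^ 2 := by
    have := Nat.cast_div_le (m := x) (n := d ^ 2) (α := ℝ)
    push_cast at this ⊢
    exact this
  have low : (x : ℝ) / (d : ℝ) ^ 2 - 1 ≤ (((x / d ^ 2 : ℕ) : ℝ)) := by
    have h1 := Nat.div_add_mod x (d ^ 2)
    have h2 : x % d ^ 2 < d ^ 2 := Nat.mod_lt _ (by positivity)
    have h1' : ((d : ℝ) ^ 2) * ((x / d ^ 2 : ℕ) : ℝ) + ((x % d ^ 2 : ℕ) : ℝ) = (x : ℝ) := by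
      exact_mod_cast h1
    have h2' : ((x % d ^ 2 : ℕ) : ℝ) < (d : ℝ) ^ 2 := by exact_mod_cast h2
    rw [sub_le_iff_le_add, div_le_iff₀ hd2]
    nlinarith
  have key : |(((x / d ^ 2 : ℕ) : ℝ)) - (x : ℝ) / (d : ℝ) ^ 2| ≤ 1 :=
    abs_le.mpr ⟨by linarith, by linarith⟩
  have hc : (x : ℝ) / (d : ℝ) ^ 2 / (x : ℝ) = 1 / (d : ℝ) ^ 2 := by
    field_simp
  have heq : (((x / d ^ 2 : ℕ) : ℝ)) / x - 1 / (d : ℝ) ^ 2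
      = ((((x / d ^ 2 : ℕ) : ℝ)) - (x : ℝ) / (d : ℝ) ^ 2) / x := by
    rw [sub_div, hc]
  rw [heq, abs_div, abs_of_pos hxR]
  gcongr

private lemma sqfree_sqrt_tendsto : Tendsto Nat.sqrt atTop atTop := by
  refine tendsto_atTop_atTop.mpr fun b => ⟨b * b, fun a ha => ?_⟩
  exact Nat.le_sqrt.mpr ha

theorem squarefree_density :
    Tendsto (fun x : ℕ =>
      (((Finset.Icc 1 x).filter (fun n => Squarefree n)).card : ℝ) / (x : ℝ))
      atTop (nhds (6 / Real.pi ^ 2)) := by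
  set c : ℝ := 6 / Real.pi ^ 2 with hc
  -- partial sums of g over Icc 1 N tend to c
  have hIccsum : ∀ N : ℕ, ∑ d ∈ Icc 1 N, sqfreeG d = ∑ d ∈ Finset.range (N + 1), sqfreeG d := by
    intro N
    have h : Finset.range (N + 1) = insert 0 (Icc 1 N) := by
      ext m; simp [Nat.lt_succ_iff]; omega
    rw [h, Finset.sum_insert (by simp)]
    simp [sqfreeG]
  have hpartial : Tendsto (fun N : ℕ => ∑ d ∈ Icc 1 N, sqfreeG d) atTop (nhds c) := by
    have h1 := sqfree_hasSum_g.tendsto_sum_nat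
    have h2 : Tendsto (fun N : ℕ => ∑ d ∈ Finset.range (N + 1), sqfreeG d) atTop (nhds c) :=
      h1.comp (tendsto_add_atTop_nat 1)
    simpa [hIccsum] using h2
  have hP : Tendsto (fun x : ℕ => ∑ d ∈ Icc 1 (Nat.sqrt x), sqfreeG d) atTop (nhds c) :=
    hpartial.comp sqfree_sqrt_tendsto
  -- error term
  set F : ℕ → ℝ := fun x =>
    (((Finset.Icc 1 x).filter (fun n => Squarefree n)).card : ℝ) / (x : ℝ) with hF
  have hFeq : ∀ x : ℕ, 0 < x →
      F x = ∑ d ∈ Icc 1 (Nat.sqrt x), (μ d : ℝ) * (((x / d ^ 2 : ℕ) : ℝ) / x) := by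
    intro x hx
    have := sqfree_count_eq' x
    have hxR : ((x : ℝ)) ≠ 0 := by positivity
    have hcast : (((Finset.Icc 1 x).filter (fun n => Squarefree n)).card : ℝ)
        = ∑ d ∈ Icc 1 (Nat.sqrt x), (μ d : ℝ) * ((x / d ^ 2 : ℕ) : ℝ) := by
      have h2 := congrArg (fun z : ℤ => (z : ℝ)) this
      push_cast at h2
      exact h2
    rw [hF]
    simp only [hcast, Finset.sum_div]
    refine Finset.sum_congr rfl fun d _ => ?_
    ring
  have hdiff : Tendsto (fun x : ℕ => F x - ∑ d ∈ Icc 1 (Nat.sqrt x), sqfreeG d)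
      atTop (nhds 0) := by
    apply squeeze_zero_norm' (a := fun x : ℕ => 1 / (Nat.sqrt x : ℝ))
    · filter_upwards [eventually_ge_atTop 1] with x hx
      have hx0 : 0 < x := hx
      have hxR : (0 : ℝ) < (x : ℝ) := by exact_mod_cast hx0
      rw [Real.norm_eq_abs, hFeq x hx0, ← Finset.sum_sub_distrib]
      have hbound : ∀ d ∈ Icc 1 (Nat.sqrt x),
          |(μ d : ℝ) * (((x / d ^ 2 : ℕ) : ℝ) / x) - sqfreeG d| ≤ 1 / (x : ℝ) := by
        intro d hd
        rw [mem_Icc] at hd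
        have hd0 : 0 < d := hd.1
        have hμ : |(μ d : ℝ)| ≤ 1 := by
          have := abs_moebius_le_one (n := d)
          exact_mod_cast this
        have : (μ d : ℝ) * (((x / d ^ 2 : ℕ) : ℝ) / x) - sqfreeG d
            = (μ d : ℝ) * ((((x / d ^ 2 : ℕ) : ℝ)) / x - 1 / (d : ℝ) ^ 2) := by
          simp only [sqfreeG]; ring
        rw [this, abs_mul]
        calc |(μ d : ℝ)| * |(((x / d ^ 2 : ℕ) : ℝ)) / x - 1 / (d : ℝ) ^ 2|
            ≤ 1 * (1 / (x : ℝ)) := by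
              apply mul_le_mul hμ (sqfree_floor_div_bounds x d hx0 hd0) (abs_nonneg _)
              norm_num
          _ = 1 / (x : ℝ) := by ring
      have hsx : 1 ≤ Nat.sqrt x := Nat.le_sqrt.mpr (by omega)
      have hsxR : (0 : ℝ) < (Nat.sqrt x : ℝ) := by exact_mod_cast hsx
      calc |∑ d ∈ Icc 1 (Nat.sqrt x),
              ((μ d : ℝ) * (((x / d ^ 2 : ℕ) : ℝ) / x) - sqfreeG d)|
          ≤ ∑ d ∈ Icc 1 (Nat.sqrt x),
              |(μ d : ℝ) * (((x / d ^ 2 : ℕ) : ℝ) / x) - sqfreeG d| :=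
            Finset.abs_sum_le_sum_abs _ _
        _ ≤ ∑ _d ∈ Icc 1 (Nat.sqrt x), 1 / (x : ℝ) := Finset.sum_le_sum hbound
        _ = (Nat.sqrt x : ℝ) * (1 / (x : ℝ)) := by
            rw [Finset.sum_const, Nat.card_Icc]
            simp [nsmul_eq_mul]
        _ ≤ 1 / (Nat.sqrt x : ℝ) := by
            rw [mul_one_div, div_le_div_iff₀ hxR hsxR]
            have : ((Nat.sqrt x : ℝ)) * (Nat.sqrt x : ℝ) ≤ (x : ℝ) := by
              have h : x.sqrt * x.sqrt ≤ x := by simpa [pow_two] using Nat.sqrt_le' x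
              exact_mod_cast h
            nlinarith
    · exact tendsto_one_div_atTop_nhds_zero_nat.comp sqfree_sqrt_tendsto
  have hfinal : Tendsto F atTop (nhds c) := by
    have := hdiff.add hP
    rw [zero_add] at this
    have heq : (fun x : ℕ => (F x - ∑ d ∈ Icc 1 (Nat.sqrt x), sqfreeG d)
        + ∑ d ∈ Icc 1 (Nat.sqrt x), sqfreeG d) = F := by
      funext x; ring
    rwa [heq] at this
  exact hfinal
end

section
/- The function ξ(n) = (−1)^ω(n) satisfies the Dirichlet convolution identity ξ = μ ∗ η, where η is the multiplicative function defined on prime powers by η(p^k) = 1 − k. -/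
open ArithmeticFunction

/-- `ξ(n) = (-1)^ω(n)` as an arithmetic function (with value `0` at `0`). -/
def xi : ArithmeticFunction ℤ :=
  ⟨fun n => if n = 0 then 0 else (-1) ^ (ArithmeticFunction.cardDistinctFactors n), by simp⟩

/-- The multiplicative function `η` with `η(p^k) = 1 - k` on prime powers. -/
def eta : ArithmeticFunction ℤ :=
  ⟨fun n => if n = 0 then 0 else ∏ p ∈ n.primeFactors, (1 - (n.factorization p : ℤ)), by simp⟩

lemma xi_apply {n : ℕ} (hn : n ≠ 0) : xi n = (-1) ^ (ArithmeticFunction.cardDistinctFactors n) := by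
  simp [xi, hn]

lemma eta_apply {n : ℕ} (hn : n ≠ 0) :
    eta n = ∏ p ∈ n.primeFactors, (1 - (n.factorization p : ℤ)) := by
  simp [eta, hn]

lemma omega_eq (n : ℕ) : ArithmeticFunction.cardDistinctFactors n = n.primeFactors.card := by
  rw [cardDistinctFactors_apply, Nat.primeFactors, List.card_toFinset]

lemma xi_mult : xi.IsMultiplicative := by
  refine ⟨by simp [xi], ?_⟩
  intro m n hmn
  rcases eq_or_ne m 0 with rfl | hm
  · simp_all [(Nat.coprime_zero_left _).mp hmn, xi]
  rcases eq_or_ne n 0 with rfl | hn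
  · simp_all [(Nat.coprime_zero_right _).mp hmn, xi]
  rw [xi_apply (mul_ne_zero hm hn), xi_apply hm, xi_apply hn, omega_eq, omega_eq, omega_eq,
    hmn.primeFactors_mul, Finset.card_union_of_disjoint (Nat.Coprime.disjoint_primeFactors hmn),
    pow_add]

lemma eta_mult : eta.IsMultiplicative := by
  refine ⟨by simp [eta], ?_⟩
  intro m n hmn
  rcases eq_or_ne m 0 with rfl | hm
  · simp_all [(Nat.coprime_zero_left _).mp hmn, eta]
  rcases eq_or_ne n 0 with rfl | hn
  · simp_all [(Nat.coprime_zero_right _).mp hmn, eta]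
  rw [eta_apply (mul_ne_zero hm hn), eta_apply hm, eta_apply hn, hmn.primeFactors_mul,
    Finset.prod_union (Nat.Coprime.disjoint_primeFactors hmn)]
  congr 1
  · refine Finset.prod_congr rfl fun p hp => ?_
    rw [Nat.factorization_mul hm hn]
    have : n.factorization p = 0 := by
      rw [Nat.factorization_eq_zero_iff]
      right; left
      exact fun h => Finset.disjoint_left.mp (Nat.Coprime.disjoint_primeFactors hmn) hp (Nat.mem_primeFactors.mpr ⟨(Nat.mem_primeFactors.mp hp).1, h, hn⟩)
    simp [this]
  · refine Finset.prod_congr rfl fun p hp => ?_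
    rw [Nat.factorization_mul hm hn]
    have : m.factorization p = 0 := by
      rw [Nat.factorization_eq_zero_iff]
      right; left
      exact fun h => Finset.disjoint_right.mp (Nat.Coprime.disjoint_primeFactors hmn) hp (Nat.mem_primeFactors.mpr ⟨(Nat.mem_primeFactors.mp hp).1, h, hm⟩)
    simp [this]

lemma eta_prime_pow {p k : ℕ} (hp : p.Prime) : eta (p ^ k) = 1 - (k : ℤ) := by
  rcases Nat.eq_zero_or_pos k with rfl | hk
  · simp [eta]
  rw [eta_apply (pow_ne_zero _ hp.pos.ne'),
    Nat.primeFactors_prime_pow hk.ne' hp]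
  simp [Nat.Prime.factorization_pow hp]

theorem xi_eq_moebius_mul_eta : xi = ArithmeticFunction.moebius * eta := by
  rw [ArithmeticFunction.IsMultiplicative.eq_iff_eq_on_prime_powers xi xi_mult _
    (isMultiplicative_moebius.mul eta_mult)]
  intro p i hp
  rcases Nat.eq_zero_or_pos i with rfl | hi
  · simp [xi_mult.1, (isMultiplicative_moebius.mul eta_mult).1]
  rw [xi_apply (pow_ne_zero _ hp.pos.ne'), cardDistinctFactors_apply_prime_pow hp hi.ne']
  rw [ArithmeticFunction.mul_apply, Nat.sum_divisorsAntidiagonal (f := fun a b => moebius a * eta b),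
    Nat.sum_divisors_prime_pow hp]
  have hsub : ({0, 1} : Finset ℕ) ⊆ Finset.range (i + 1) := by
    intro x hx
    simp only [Finset.mem_insert, Finset.mem_singleton] at hx
    rcases hx with rfl | rfl <;> simp [Finset.mem_range] <;> omega
  have h2 : ∀ x ∈ Finset.range (i + 1), x ∉ ({0, 1} : Finset ℕ) →
      moebius (p ^ x) * eta (p ^ i / p ^ x) = 0 := by
    intro x _ hx
    simp only [Finset.mem_insert, Finset.mem_singleton, not_or] at hx
    rw [moebius_apply_prime_pow hp hx.1, if_neg hx.2, zero_mul]
  rw [← Finset.sum_subset hsub h2, Finset.sum_pair (by norm_num : (0:ℕ) ≠ 1)]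
  have e0 : p ^ i / p ^ 0 = p ^ i := by simp
  have e1 : p ^ i / p ^ 1 = p ^ (i - 1) := Nat.pow_div hi hp.pos
  rw [e0, e1, pow_zero, moebius_apply_one, moebius_apply_prime_pow hp one_ne_zero,
    if_pos rfl, eta_prime_pow hp, eta_prime_pow hp]
  have : ((i - 1 : ℕ) : ℤ) = (i : ℤ) - 1 := by
    rw [Nat.cast_sub hi]; norm_num
  rw [this]; ring
end
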